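/- Let n ≥ 2 and let G and H be connected simple graphs on the vertex set Fin n that are isomorphic. Define f on the symmetric group S_n of permutations of Fin n by f(σ) = κ(L_G, L_{H^σ}), and let M = {σ ∈ S_n : L_G = L_{H^σ}}, which is nonempty. Then for each fixed σ ∈ S_n, as the real parameter λ → +∞ (over λ > 1), the Gibbs probability λ^{-f(σ)} / ∑_{τ∈S_n} λ^{-f(τ)} converges to 1/|M| if σ ∈ M, and converges to 0 if σ ∉ M; that is, the stationary distribution of the Metropolis chain converges to the uniform distribution over the set of permutations that make H identical to G. -/

import Mathlib

/-!
Every Rayleigh ratio `r ∈ R(G,H)` comes with `r⁻¹ ∈ R(H,G)`, so `κ(L_G, L_H) ≥ r · r⁻¹ = 1`, and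
`κ = 1` forces all of `R(G,H)` to be one constant `S`. The Laplacian quadratic forms are then
proportional on the sum-zero hyperplane, hence everywhere since they ignore constant shifts, so
`L_G = S • L_H` as symmetric matrices, and an edge entry gives `S = 1`. Thus `M` is exactly the set
of minimisers of `f` (nonempty because an isomorphism relabels `H` into `G`), and the Gibbs weights
`λ^{-f}` concentrate uniformly on the minimisers as `λ → ∞`.
-/

open Matrix Finset Filter Topology

open scoped Classical

/-- The real Laplacian matrix of a simple graph on `Fin n` (Mathlib's
`SimpleGraph.lapMatrix` with real entries, using classical decidability of adjacency). -/
noncomputable def lapR {n : ℕ} (G : SimpleGraph (Fin n)) : Matrix (Fin n) (Fin n) ℝ :=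
  letI := Classical.decRel G.Adj
  G.lapMatrix ℝ

/-- The Rayleigh ratio set
`R(G,H) = {(xᵀ L_G x)/(xᵀ L_H x) : x ∈ ℝⁿ, x ≠ 0, ∑ i, x i = 0}`. -/
def raySet {n : ℕ} (G H : SimpleGraph (Fin n)) : Set ℝ :=
  {r | ∃ x : Fin n → ℝ, x ≠ 0 ∧ ∑ i, x i = 0 ∧
    r = (x ⬝ᵥ (lapR G) *ᵥ x) / (x ⬝ᵥ (lapR H) *ᵥ x)}

/-- The generalized condition number `κ(L_G, L_H) = sSup R(G,H) · sSup R(H,G)`. -/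
noncomputable def condNumber {n : ℕ} (G H : SimpleGraph (Fin n)) : ℝ :=
  sSup (raySet G H) * sSup (raySet H G)

/-- The relabeling `H^σ` of a graph `H` on `Fin n` by a permutation `σ`. -/
def relabel {n : ℕ} (H : SimpleGraph (Fin n)) (σ : Equiv.Perm (Fin n)) :
    SimpleGraph (Fin n) :=
  H.map σ.toEmbedding


theorem Matrix.IsSymm.eq_zero_of_dotProduct_mulVec_self {ι R : Type*} [Fintype ι] [Field R]
    [CharZero R] {D : Matrix ι ι R} (hD : D.IsSymm) (h : ∀ x, x ⬝ᵥ D *ᵥ x = 0) : D = 0 := by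
  ext i j
  have hii := h (Pi.single i 1)
  have hjj := h (Pi.single j 1)
  have hij := h (Pi.single i 1 + Pi.single j 1)
  have hsymm : D j i = D i j := by simpa using congrFun (congrFun hD i) j
  simp only [mulVec_add, dotProduct_add, add_dotProduct, mulVec_single_one, single_dotProduct,
    one_mul, col_apply] at hii hjj hij
  rw [zero_apply]
  linear_combination (1 / 2 : R) * (hij - hii - hjj - hsymm)

theorem exists_ne_zero_sum_eq_zero (ι : Type*) [Fintype ι] [Nontrivial ι] :
    ∃ x : ι → ℝ, x ≠ 0 ∧ ∑ i, x i = 0 := by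
  obtain ⟨i, j, hij⟩ := exists_pair_ne ι
  refine ⟨Pi.single i 1 - Pi.single j 1, fun h => ?_, by simp [Finset.sum_sub_distrib]⟩
  simpa [hij] using congrFun h i

section Laplacian

variable {n : ℕ}

theorem lapR_isSymm (G : SimpleGraph (Fin n)) : (lapR G).IsSymm :=
  G.isSymm_lapMatrix ℝ

theorem lapR_apply_of_ne (G : SimpleGraph (Fin n)) {i j : Fin n} (hij : i ≠ j) :
    lapR G i j = if G.Adj i j then -1 else 0 := by
  simp [lapR, SimpleGraph.lapMatrix, SimpleGraph.degMatrix, hij, SimpleGraph.adjMatrix_apply,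
    apply_ite]

theorem dotProduct_lapR_mulVec (G : SimpleGraph (Fin n)) (x : Fin n → ℝ) :
    x ⬝ᵥ lapR G *ᵥ x = (∑ i, ∑ j, if G.Adj i j then (x i - x j) ^ 2 else 0) / 2 := by
  rw [← toLinearMap₂'_apply', lapR, SimpleGraph.lapMatrix_toLinearMap₂']

theorem dotProduct_lapR_mulVec_nonneg (G : SimpleGraph (Fin n)) (x : Fin n → ℝ) :
    0 ≤ x ⬝ᵥ lapR G *ᵥ x := by
  rw [dotProduct_lapR_mulVec]
  positivity

theorem dotProduct_lapR_mulVec_add_const (G : SimpleGraph (Fin n)) (x : Fin n → ℝ) (c : ℝ) :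
    (x + fun _ => c) ⬝ᵥ lapR G *ᵥ (x + fun _ => c) = x ⬝ᵥ lapR G *ᵥ x := by
  simp only [dotProduct_lapR_mulVec, Pi.add_apply, add_sub_add_right_eq_sub]

theorem dotProduct_lapR_mulVec_pos {G : SimpleGraph (Fin n)} (hG : G.Connected)
    {x : Fin n → ℝ} (hx : x ≠ 0) (hsum : ∑ i, x i = 0) : 0 < x ⬝ᵥ lapR G *ᵥ x := by
  refine (dotProduct_lapR_mulVec_nonneg G x).lt_of_ne fun h => hx ?_
  obtain ⟨i, -⟩ := Function.ne_iff.mp hx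
  have hconst : ∀ j, x j = x i := fun j =>
    (G.lapMatrix_toLinearMap₂'_apply'_eq_zero_iff_forall_reachable x).mp
      (by rw [toLinearMap₂'_apply']; exact h.symm) j i (hG j i)
  have hxi : x i = 0 := by
    simpa [hconst, (Fin.pos i).ne'] using hsum
  exact funext fun j => (hconst j).trans hxi

end Laplacian

section RayleighQuotients

variable {n : ℕ} {G H : SimpleGraph (Fin n)}

theorem raySet_nonempty [Nontrivial (Fin n)] (G H : SimpleGraph (Fin n)) :
    (raySet G H).Nonempty :=
  let ⟨x, hx, hsum⟩ := exists_ne_zero_sum_eq_zero (Fin n)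
  ⟨_, x, hx, hsum, rfl⟩

theorem pos_of_mem_raySet (hG : G.Connected) (hH : H.Connected) {r : ℝ}
    (hr : r ∈ raySet G H) : 0 < r := by
  obtain ⟨x, hx, hsum, rfl⟩ := hr
  exact div_pos (dotProduct_lapR_mulVec_pos hG hx hsum) (dotProduct_lapR_mulVec_pos hH hx hsum)

theorem inv_mem_raySet {r : ℝ} (hr : r ∈ raySet G H) : r⁻¹ ∈ raySet H G := by
  obtain ⟨x, hx, hsum, rfl⟩ := hr
  exact ⟨x, hx, hsum, inv_div _ _⟩

-- The ratio is invariant under scaling `x`, so it is enough to bound it on a compact sphere.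
theorem raySet_bddAbove (hH : H.Connected) : BddAbove (raySet G H) := by
  set K := {x : Fin n → ℝ | ∑ i, x i = 0 ∧ ‖x‖ = 1}
  have hK : IsCompact K :=
    (isCompact_sphere (0 : Fin n → ℝ) 1).of_isClosed_subset
      ((isClosed_eq (by fun_prop) continuous_const).inter (isClosed_eq (by fun_prop) continuous_const))
      fun x hx => by simpa using hx.2
  have hcont : ContinuousOn
      (fun x : Fin n → ℝ => (x ⬝ᵥ lapR G *ᵥ x) / (x ⬝ᵥ lapR H *ᵥ x)) K := by
    refine ContinuousOn.div (by fun_prop) (by fun_prop) fun x ⟨hsum, hnorm⟩ => ?_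
    have hx : x ≠ 0 := by rintro rfl; simp at hnorm
    exact (dotProduct_lapR_mulVec_pos hH hx hsum).ne'
  refine (hK.image_of_continuousOn hcont).bddAbove.mono ?_
  rintro r ⟨x, hx, hsum, rfl⟩
  have hnorm : ‖x‖ ≠ 0 := norm_ne_zero_iff.mpr hx
  refine ⟨‖x‖⁻¹ • x, ⟨?_, ?_⟩, ?_⟩
  · simp [← Finset.mul_sum, hsum]
  · rw [norm_smul, norm_inv, norm_norm, inv_mul_cancel₀ hnorm]
  · simp only [smul_dotProduct, mulVec_smul, dotProduct_smul, smul_eq_mul]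
    rw [mul_div_mul_left _ _ (inv_ne_zero hnorm), mul_div_mul_left _ _ (inv_ne_zero hnorm)]

theorem raySet_eq_singleton_one [Nontrivial (Fin n)] (hG : G.Connected)
    (h : lapR G = lapR H) : raySet G H = {1} := by
  refine (Set.Nonempty.subset_singleton_iff (raySet_nonempty G H)).mp ?_
  rintro r ⟨x, hx, hsum, rfl⟩
  rw [← h, div_self (dotProduct_lapR_mulVec_pos hG hx hsum).ne', Set.mem_singleton_iff]

end RayleighQuotients

section ConditionNumber

variable {n : ℕ} {G H : SimpleGraph (Fin n)}

theorem one_le_condNumber [Nontrivial (Fin n)] (hG : G.Connected) (hH : H.Connected) :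
    1 ≤ condNumber G H := by
  obtain ⟨r, hr⟩ := raySet_nonempty G H
  have hr0 := pos_of_mem_raySet hG hH hr
  have hrS : r ≤ sSup (raySet G H) := le_csSup (raySet_bddAbove hH) hr
  calc (1 : ℝ) = r * r⁻¹ := (mul_inv_cancel₀ hr0.ne').symm
    _ ≤ condNumber G H :=
      mul_le_mul hrS (le_csSup (raySet_bddAbove hG) (inv_mem_raySet hr)) (inv_nonneg.mpr hr0.le)
        (hr0.le.trans hrS)

theorem condNumber_eq_one_of_lapR_eq [Nontrivial (Fin n)] (hG : G.Connected)
    (hH : H.Connected) (h : lapR G = lapR H) : condNumber G H = 1 := by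
  rw [condNumber, raySet_eq_singleton_one hG h, raySet_eq_singleton_one hH h.symm,
    csSup_singleton, one_mul]

theorem raySet_subset_sSup_of_condNumber_eq_one (hG : G.Connected) (hH : H.Connected)
    (h : condNumber G H = 1) : raySet G H ⊆ {sSup (raySet G H)} := by
  intro r hr
  have hr0 := pos_of_mem_raySet hG hH hr
  have hrS : r ≤ sSup (raySet G H) := le_csSup (raySet_bddAbove hH) hr
  have hinv : r⁻¹ ≤ (sSup (raySet G H))⁻¹ :=
    eq_inv_of_mul_eq_one_right h ▸ le_csSup (raySet_bddAbove hG) (inv_mem_raySet hr)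
  exact le_antisymm hrS ((inv_le_inv₀ hr0 (hr0.trans_le hrS)).mp hinv)

-- Shifting `x` by a constant changes neither quadratic form and makes its coordinates sum to zero.
theorem dotProduct_lapR_mulVec_eq_mul_of_raySet_subset [NeZero n] (hH : H.Connected) {S : ℝ}
    (hS : raySet G H ⊆ {S}) (x : Fin n → ℝ) :
    x ⬝ᵥ lapR G *ᵥ x = S * (x ⬝ᵥ lapR H *ᵥ x) := by
  rw [← dotProduct_lapR_mulVec_add_const G x (-(∑ i, x i) / n),
    ← dotProduct_lapR_mulVec_add_const H x (-(∑ i, x i) / n)]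
  set y := x + fun _ => -(∑ i, x i) / n
  have hy : ∑ i, y i = 0 := by
    simp [y, Finset.sum_add_distrib, mul_div_cancel₀ _ (NeZero.ne (n : ℝ))]
  rcases eq_or_ne y 0 with h0 | h0
  · simp [h0]
  · have hratio := hS ⟨y, h0, hy, rfl⟩
    rwa [Set.mem_singleton_iff, div_eq_iff (dotProduct_lapR_mulVec_pos hH h0 hy).ne'] at hratio

theorem lapR_eq_smul_of_raySet_subset [NeZero n] (hH : H.Connected) {S : ℝ}
    (hS : raySet G H ⊆ {S}) : lapR G = S • lapR H := by
  rw [← sub_eq_zero]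
  refine ((lapR_isSymm G).sub ((lapR_isSymm H).smul S)).eq_zero_of_dotProduct_mulVec_self
    fun x => ?_
  rw [sub_mulVec, dotProduct_sub, smul_mulVec, dotProduct_smul, smul_eq_mul, sub_eq_zero]
  exact dotProduct_lapR_mulVec_eq_mul_of_raySet_subset hH hS x

theorem lapR_eq_of_condNumber_eq_one [Nontrivial (Fin n)] (hG : G.Connected)
    (hH : H.Connected) (h : condNumber G H = 1) : lapR G = lapR H := by
  have : NeZero n := ⟨(Fin.pos (Classical.arbitrary (Fin n))).ne'⟩
  set S := sSup (raySet G H)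
  have hGH : lapR G = S • lapR H :=
    lapR_eq_smul_of_raySet_subset hH (raySet_subset_sSup_of_condNumber_eq_one hG hH h)
  obtain ⟨i, j, hij⟩ : ∃ i j, G.Adj i j :=
    ⟨_, hG.preconnected.exists_adj_of_nontrivial (Classical.arbitrary (Fin n))⟩
  have hentry := congrFun (congrFun hGH i) j
  rw [Matrix.smul_apply, lapR_apply_of_ne G hij.ne, lapR_apply_of_ne H hij.ne, if_pos hij] at hentry
  have hS : S = 1 := by split_ifs at hentry <;> simpa using hentry.symm
  rw [hGH, hS, one_smul]

theorem condNumber_eq_one_iff [Nontrivial (Fin n)] (hG : G.Connected) (hH : H.Connected) :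
    condNumber G H = 1 ↔ lapR G = lapR H :=
  ⟨lapR_eq_of_condNumber_eq_one hG hH, condNumber_eq_one_of_lapR_eq hG hH⟩

end ConditionNumber

theorem tendsto_rpow_sub_atTop {c d : ℝ} (h : c ≤ d) :
    Tendsto (fun lam : ℝ => lam ^ (c - d)) atTop (𝓝 (if d = c then 1 else 0)) := by
  split_ifs with hdc
  · simp [hdc]
  · simpa only [neg_sub] using tendsto_rpow_neg_atTop (sub_pos.mpr (h.lt_of_ne' hdc))

-- Multiplying numerator and denominator by `lam ^ c` turns every term into `lam ^ (c - f b)`,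
-- which tends to the indicator of `M`.
theorem tendsto_rpow_neg_div_sum_rpow_neg {α : Type*} [Fintype α] {f : α → ℝ} {c : ℝ}
    (hc : ∀ a, c ≤ f a) {M : Set α} (hM : ∀ a, a ∈ M ↔ f a = c) (hMne : M.Nonempty) (a : α) :
    Tendsto (fun lam : ℝ => lam ^ (-f a) / ∑ b, lam ^ (-f b)) atTop
      (𝓝 (if a ∈ M then 1 / (Nat.card M : ℝ) else 0)) := by
  have hterm (b : α) : Tendsto (fun lam : ℝ => lam ^ (c - f b)) atTop
      (𝓝 (if b ∈ M then 1 else 0)) := by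
    simpa only [hM] using tendsto_rpow_sub_atTop (hc b)
  have hsum : Tendsto (fun lam : ℝ => ∑ b, lam ^ (c - f b)) atTop (𝓝 (Nat.card M : ℝ)) := by
    convert tendsto_finsetSum Finset.univ fun b _ => hterm b
    rw [Finset.sum_boole, Set.filter_mem_univ_eq_toFinset, Nat.card_eq_card_toFinset]
  have hcard : (Nat.card M : ℝ) ≠ 0 := by
    have := hMne.to_subtype
    exact Nat.cast_ne_zero.mpr Nat.card_pos.ne'
  have hlim := (hterm a).div hsum hcard
  rw [apply_ite (· / (Nat.card M : ℝ)), zero_div] at hlim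
  refine hlim.congr' ?_
  filter_upwards [eventually_gt_atTop 0] with lam hlam
  have hshift (d : ℝ) : lam ^ (c - d) = lam ^ c * lam ^ (-d) := by
    rw [sub_eq_add_neg, Real.rpow_add hlam]
  simp only [Pi.div_apply, hshift, ← Finset.mul_sum]
  exact mul_div_mul_left _ _ (Real.rpow_pos_of_pos hlam c).ne'

section Relabel

variable {n : ℕ} {G H : SimpleGraph (Fin n)}

theorem relabel_connected (hH : H.Connected) (σ : Equiv.Perm (Fin n)) :
    (relabel H σ).Connected :=
  (SimpleGraph.Iso.map σ H).connected_iff.mp hH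

theorem relabel_symm_toEquiv (e : G ≃g H) : relabel H e.symm.toEquiv = G := by
  change H.map e.toEquiv.symm.toEmbedding = G
  rw [SimpleGraph.map_symm]
  ext a b
  exact e.map_adj_iff

end Relabel

/-- Let `n ≥ 2` and let `G`, `H` be connected isomorphic simple graphs on
`Fin n`. Define `f` on the symmetric group by `f σ = κ(L_G, L_{H^σ})`, and let
`M = {σ : L_G = L_{H^σ}}`. Then `M` is nonempty, and for each fixed permutation `σ`, as the
real parameter `λ → +∞` the Gibbs probability `λ^{-f σ} / ∑_τ λ^{-f τ}` converges to
`1/|M|` if `σ ∈ M` and to `0` otherwise; i.e. the stationary distribution of the Metropolis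
chain converges to the uniform distribution over the permutations making `H` identical
to `G`. -/
theorem metropolis_stationary_tendsto_uniform_over_isomorphisms
    {n : ℕ} (hn : 2 ≤ n) (G H : SimpleGraph (Fin n))
    (hG : G.Connected) (hH : H.Connected) (hiso : Nonempty (G ≃g H))
    (f : Equiv.Perm (Fin n) → ℝ) (hf : ∀ σ, f σ = condNumber G (relabel H σ))
    (M : Set (Equiv.Perm (Fin n))) (hM : M = {σ | lapR G = lapR (relabel H σ)})
    (σ : Equiv.Perm (Fin n)) :
    M.Nonempty ∧
      Tendsto
        (fun lam : ℝ => lam ^ (-(f σ)) / ∑ τ : Equiv.Perm (Fin n), lam ^ (-(f τ)))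
        atTop (𝓝 (if σ ∈ M then 1 / (Nat.card M : ℝ) else 0)) := by
  have : Nontrivial (Fin n) := Fin.nontrivial_iff_two_le.mpr hn
  obtain ⟨e⟩ := hiso
  have hMne : M.Nonempty := ⟨e.symm.toEquiv, by rw [hM, Set.mem_ofPred_eq, relabel_symm_toEquiv]⟩
  have hf_ge (τ : Equiv.Perm (Fin n)) : 1 ≤ f τ :=
    hf τ ▸ one_le_condNumber hG (relabel_connected hH τ)
  have hM_iff (τ : Equiv.Perm (Fin n)) : τ ∈ M ↔ f τ = 1 := by
    rw [hM, Set.mem_ofPred_eq, hf τ, condNumber_eq_one_iff hG (relabel_connected hH τ)]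
  exact ⟨hMne, tendsto_rpow_neg_div_sum_rpow_neg hf_ge hM_iff hMne σ⟩
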